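/- arXiv:2107.12814 — 2 statements merged into one kernel-verified Lean document; each statement's English description precedes it below -/
import Mathlib

section
/- Let P : ℝ^n → ℝ be the evaluation of a homogeneous polynomial in n variables (all monomials of the same total degree). Let A ⊆ ℝ^n be measurable and x ∈ ℝ^n a point at which A has density one. Define φ : A \ {x} → ℝ by φ(y) = P((y − x)/‖y − x‖). Suppose that for every ε > 0 the set {y ∈ A \ {x} : |φ(y)| > ε} has density zero at x. Then P is identically zero. (This is the paper's Lemma 3.2 specialized to the abelian Carnot group ℝ^n, where dilations are scalar multiplications.) -/
open MeasureTheory Metric Filter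

noncomputable section

/-- `ℝ^n` with the Euclidean norm. -/
abbrev Euc (n : ℕ) := EuclideanSpace ℝ (Fin n)

/-- A set `S ⊆ ℝ^n` has density one at `x` if
`vol(S ∩ B(x,r))/vol(B(x,r)) → 1` as `r → 0⁺`. -/
def DensityOneAt {n : ℕ} (S : Set (Euc n)) (x : Euc n) : Prop :=
  Tendsto (fun r : ℝ => volume (S ∩ ball x r) / volume (ball x r))
    (nhdsWithin 0 (Set.Ioi 0)) (nhds 1)

/-- A set has density zero at `x` if its complement has density one at `x`. -/
def DensityZeroAt {n : ℕ} (S : Set (Euc n)) (x : Euc n) : Prop :=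
  DensityOneAt Sᶜ x

/-- Degree `|J|` of a multi-index. -/
def mdeg {n : ℕ} (J : Fin n → ℕ) : ℕ := ∑ i, J i

/-- Monomial `x^J = x₁^{j₁} ⋯ xₙ^{jₙ}`. -/
def mpow {n : ℕ} (x : Euc n) (J : Fin n → ℕ) : ℝ := ∏ i, (x i) ^ (J i)

/-- `J! = j₁! ⋯ jₙ!`. -/
def Jfact {n : ℕ} (J : Fin n → ℕ) : ℕ := ∏ i, Nat.factorial (J i)

/-- `p : ℝ^n → ℝ` is a polynomial function of (total) degree at most `k`. -/
def IsPolyFun (n k : ℕ) (p : Euc n → ℝ) : Prop :=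
  ∃ P : MvPolynomial (Fin n) ℝ, P.totalDegree ≤ k ∧
    ∀ x : Euc n, p x = MvPolynomial.eval (fun i => x i) P

/-- `f : D → ℝ` is approximately differentiable of order `k` at `x₀` (a density point
of `D`) with polynomial `p`: `p` has degree at most `k` and for every `ε > 0` the set
`{x ∈ D : |f x − p x| > ε ‖x − x₀‖^k}` has density zero at `x₀`. -/
def ApproxDiffAt {n : ℕ} (k : ℕ) (D : Set (Euc n)) (f : Euc n → ℝ)
    (x₀ : Euc n) (p : Euc n → ℝ) : Prop :=
  DensityOneAt D x₀ ∧ IsPolyFun n k p ∧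
    ∀ ε : ℝ, 0 < ε →
      DensityZeroAt {x | x ∈ D ∧ ε * ‖x - x₀‖ ^ k < |f x - p x|} x₀

/-- `f : D → ℝ` has an approximate `(k−1)`-Taylor polynomial at `x₀` (a density point
of `D`) with polynomial `p`: `p` has degree at most `k−1` and there is `M > 0` such that
`{x ∈ D : |f x − p x| > M ‖x − x₀‖^k}` has density zero at `x₀`. -/
def HasApproxTaylorAt {n : ℕ} (k : ℕ) (D : Set (Euc n)) (f : Euc n → ℝ)
    (x₀ : Euc n) (p : Euc n → ℝ) : Prop :=
  DensityOneAt D x₀ ∧ IsPolyFun n (k - 1) p ∧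
    ∃ M : ℝ, 0 < M ∧
      DensityZeroAt {x | x ∈ D ∧ M * ‖x - x₀‖ ^ k < |f x - p x|} x₀

/-- The finset of multi-indices `J` with `|J| ≤ k`. -/
def multiIdxLe (n k : ℕ) : Finset (Fin n → ℕ) :=
  (Fintype.piFinset fun _ : Fin n => Finset.range (k+1)).filter fun J => mdeg J ≤ k

/-- The finset of multi-indices `J` with `|J| < k` (i.e. `|J| ≤ k−1`). -/
def multiIdxLt (n k : ℕ) : Finset (Fin n → ℕ) :=
  (Fintype.piFinset fun _ : Fin n => Finset.range (k+1)).filter fun J => mdeg J < k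

/-- Partial derivative `∂g/∂xᵢ` (as a line derivative in the direction `eᵢ`). -/
def pd {n : ℕ} (i : Fin n) (g : Euc n → ℝ) : Euc n → ℝ :=
  fun x => lineDeriv ℝ g x (EuclideanSpace.single i 1)

/-- The list of directions `(1,…,1,2,…,2,…)` (direction `i` repeated `J i` times)
encoding the iterated partial derivative `∂^{|J|}/∂x₁^{j₁}⋯∂xₙ^{jₙ}`. -/
def multiList (n : ℕ) (J : Fin n → ℕ) : List (Fin n) :=
  (List.finRange n).flatMap fun i => List.replicate (J i) i

/-- Iterated partial derivatives along a list of coordinate directions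
(the head of the list is the outermost derivative). -/
def iterD {n : ℕ} : List (Fin n) → (Euc n → ℝ) → (Euc n → ℝ)
  | [], g => g
  | i :: L, g => pd i (iterD L g)

/-- The iterated partial derivatives along the list `L` all exist at every point. -/
def iterDExists {n : ℕ} : List (Fin n) → (Euc n → ℝ) → Prop
  | [], _ => True
  | i :: L, g => iterDExists L g ∧
      ∀ x : Euc n, LineDifferentiableAt ℝ (iterD L g) x (EuclideanSpace.single i 1)

/-- `D^J u = ∂^{|J|}u/∂x₁^{j₁}⋯∂xₙ^{jₙ}`. -/
def DJ {n : ℕ} (J : Fin n → ℕ) (u : Euc n → ℝ) : Euc n → ℝ := iterD (multiList n J) u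

/-- The Taylor polynomial of `u` of degree `k−1` centered at `x₀`:
`P_{x₀}(y) = Σ_{|I| ≤ k−1} D^I u(x₀) (y − x₀)^I / I!`. -/
def TaylorPoly {n : ℕ} (k : ℕ) (u : Euc n → ℝ) (x₀ : Euc n) : Euc n → ℝ :=
  fun y => ∑ I ∈ multiIdxLt n k, DJ I u x₀ * mpow (y - x₀) I / (Jfact I : ℝ)

/-- `u` belongs to `Lip(k, ℝ^n)` with constant `M`: all partial derivatives `D^J u`
with `|J| ≤ k−1` exist at every point, and for all such `J` and all `x, x₀`,
`|D^J u(x₀)| ≤ M` and `|D^J u(x) − D^J P_{x₀}(x)| ≤ M ‖x − x₀‖^{k−|J|}`. -/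
def MemLip (n k : ℕ) (M : ℝ) (u : Euc n → ℝ) : Prop :=
  (∀ J : Fin n → ℕ, mdeg J < k → iterDExists (multiList n J) u) ∧
  ∀ J : Fin n → ℕ, mdeg J < k → ∀ x x₀ : Euc n,
    |DJ J u x₀| ≤ M ∧
    |DJ J u x - DJ J (TaylorPoly k u x₀) x| ≤ M * ‖x - x₀‖ ^ (k - mdeg J)

/-- Truncation of `f` at level `h`: equals `f` where `−h < f < h`, equals `h` where
`f ≥ h`, and equals `−h` where `f ≤ −h`. -/
def trunc {n : ℕ} (h : ℕ) (f : Euc n → ℝ) : Euc n → ℝ :=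
  fun x => if (h : ℝ) ≤ f x then (h : ℝ) else if f x ≤ -(h : ℝ) then -(h : ℝ) else f x

/-! If `P` does not vanish at some `v ≠ 0`, then by continuity `|P| > ε` on an open set `U` of
directions around `v / ‖v‖`. The cone of vectors with direction in `U` is invariant under
dilations, so it fills a fixed positive proportion of every ball centred at its vertex. Moved to
the vertex `x`, it is covered by the exceptional set of `φ` and the complement of `A`, both of
density zero at `x`: a contradiction. Homogeneity then propagates `P = 0` from the nonzero vectors
to the origin. -/

open Pointwise Set

theorem MvPolynomial.IsHomogeneous.eval_smul {R σ : Type*} [CommSemiring R]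
    {φ : MvPolynomial σ R} {m : ℕ} (hφ : φ.IsHomogeneous m) (c : R) (v : σ → R) :
    MvPolynomial.eval (c • v) φ = c ^ m * MvPolynomial.eval v φ := by
  simp only [MvPolynomial.eval_eq, Finset.mul_sum]
  refine Finset.sum_congr rfl fun s hs => ?_
  have hdeg : s.degree = m := by
    rw [Finsupp.degree_eq_weight_one]
    exact hφ (MvPolynomial.mem_support_iff.mp hs)
  rw [Finsupp.degree_apply] at hdeg
  simp only [Pi.smul_apply, smul_eq_mul, mul_pow, Finset.prod_mul_distrib,
    Finset.prod_pow_eq_pow_sum, hdeg]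
  ring

section NormalizedCone

variable {E : Type*} [NormedAddCommGroup E] [NormedSpace ℝ E] {U : Set E}

def normalizedCone (U : Set E) : Set E := {v | v ≠ 0 ∧ ‖v‖⁻¹ • v ∈ U}

lemma inv_norm_smul_smul_of_pos (v : E) {t : ℝ} (ht : 0 < t) :
    ‖t • v‖⁻¹ • (t • v) = ‖v‖⁻¹ • v := by
  rw [norm_smul, Real.norm_of_nonneg ht.le, smul_smul]
  congr 1
  field_simp

lemma smul_mem_normalizedCone_iff {v : E} {t : ℝ} (ht : 0 < t) :
    t • v ∈ normalizedCone U ↔ v ∈ normalizedCone U := by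
  simp only [normalizedCone, mem_ofPred_eq, smul_ne_zero_iff, ht.ne', ne_eq, not_false_eq_true,
    true_and, inv_norm_smul_smul_of_pos v ht]

lemma smul_normalizedCone {t : ℝ} (ht : 0 < t) : t • normalizedCone U = normalizedCone U := by
  ext v
  rw [mem_smul_set_iff_inv_smul_mem₀ ht.ne', smul_mem_normalizedCone_iff (inv_pos.mpr ht)]

lemma IsOpen.normalizedCone (hU : IsOpen U) : IsOpen (normalizedCone U) := by
  have hdir : ContinuousOn (fun v : E => ‖v‖⁻¹ • v) {v | v ≠ 0} :=
    (continuous_norm.continuousOn.inv₀ fun _ hv => norm_ne_zero_iff.mpr hv).smul continuousOn_id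
  exact hdir.isOpen_inter_preimage isOpen_ne hU

lemma normalizedCone_inter_ball_nonempty {v : E} (hv : v ∈ normalizedCone U) :
    (normalizedCone U ∩ ball 0 1).Nonempty := by
  have hv0 : 0 < ‖v‖ := norm_pos_iff.mpr hv.1
  refine ⟨(2 * ‖v‖)⁻¹ • v, (smul_mem_normalizedCone_iff (by positivity)).mpr hv, ?_⟩
  rw [mem_ball_zero_iff, norm_smul, norm_inv, norm_mul, Real.norm_two, norm_norm]
  field_simp
  norm_num

lemma vadd_normalizedCone_inter_ball (x : E) {r : ℝ} (hr : 0 < r) :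
    (x +ᵥ normalizedCone U) ∩ ball x r = x +ᵥ r • (normalizedCone U ∩ ball 0 1) := by
  rw [smul_set_inter₀ hr.ne', smul_normalizedCone hr, smul_unitBall hr.ne', vadd_set_inter,
    vadd_ball, vadd_eq_add, add_zero, Real.norm_of_nonneg hr.le]

lemma addHaar_vadd_normalizedCone_inter_ball [MeasurableSpace E] [BorelSpace E]
    [FiniteDimensional ℝ E] (μ : Measure E) [μ.IsAddHaarMeasure] (x : E) {r : ℝ}
    (hr : 0 < r) :
    μ ((x +ᵥ normalizedCone U) ∩ ball x r) =
      ENNReal.ofReal (r ^ Module.finrank ℝ E) * μ (normalizedCone U ∩ ball 0 1) := by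
  rw [vadd_normalizedCone_inter_ball x hr, measure_vadd, Measure.addHaar_smul,
    abs_of_pos (pow_pos hr _)]

end NormalizedCone

open scoped ENNReal Topology

section Density

variable {n : ℕ} {S T : Set (Euc n)} {x : Euc n} {r : ℝ}

-- `DensityOneAt S x` unfolds to `Tendsto (densityRatio S x) (𝓝[>] 0) (𝓝 1)`.
def densityRatio (S : Set (Euc n)) (x : Euc n) (r : ℝ) : ℝ≥0∞ :=
  volume (S ∩ ball x r) / volume (ball x r)

lemma densityRatio_mono (hST : S ⊆ T) : densityRatio S x r ≤ densityRatio T x r :=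
  ENNReal.div_le_div_right (measure_mono (inter_subset_inter_left _ hST)) _

lemma densityRatio_le_one : densityRatio S x r ≤ 1 :=
  (ENNReal.div_le_div_right (measure_mono inter_subset_right) _).trans ENNReal.div_self_le_one

lemma densityRatio_union_le :
    densityRatio (S ∪ T) x r ≤ densityRatio S x r + densityRatio T x r := by
  rw [densityRatio, densityRatio, densityRatio, ← ENNReal.add_div, union_inter_distrib_right]
  exact ENNReal.div_le_div_right (measure_union_le _ _) _

lemma densityRatio_compl (hS : MeasurableSet S) (hr : 0 < r) :
    densityRatio Sᶜ x r = 1 - densityRatio S x r := by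
  have hball : volume (ball x r) ≠ 0 := (measure_ball_pos _ _ hr).ne'
  have hsplit : volume (S ∩ ball x r) + volume (Sᶜ ∩ ball x r) = volume (ball x r) := by
    rw [inter_comm S, inter_comm Sᶜ, ← sdiff_eq]
    exact measure_inter_add_sdiff _ hS
  refine ENNReal.eq_sub_of_add_eq (ne_top_of_le_ne_top ENNReal.one_ne_top densityRatio_le_one) ?_
  rw [densityRatio, densityRatio, ← ENNReal.add_div, add_comm, hsplit,
    ENNReal.div_self hball measure_ball_lt_top.ne]

lemma DensityZeroAt.mono (h : DensityZeroAt T x) (hST : S ⊆ T) : DensityZeroAt S x :=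
  tendsto_of_tendsto_of_tendsto_of_le_of_le h tendsto_const_nhds
    (fun _ => densityRatio_mono (compl_subset_compl.mpr hST)) fun _ => densityRatio_le_one

lemma DensityOneAt.densityZeroAt_compl (h : DensityOneAt S x) : DensityZeroAt Sᶜ x := by
  rwa [DensityZeroAt, compl_compl]

lemma tendsto_densityRatio_compl (hS : MeasurableSet S) {a : ℝ≥0∞}
    (h : Tendsto (densityRatio S x) (𝓝[>] 0) (𝓝 a)) :
    Tendsto (densityRatio Sᶜ x) (𝓝[>] 0) (𝓝 (1 - a)) :=
  ((ENNReal.continuous_sub_left ENNReal.one_ne_top).tendsto a |>.comp h).congr'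
    (eventually_mem_nhdsWithin.mono fun _ hr => (densityRatio_compl hS hr).symm)

lemma densityZeroAt_iff_tendsto (hS : MeasurableSet S) :
    DensityZeroAt S x ↔ Tendsto (densityRatio S x) (𝓝[>] 0) (𝓝 0) := by
  refine ⟨fun h => ?_, fun h => ?_⟩
  · simpa using tendsto_densityRatio_compl hS.compl h
  · have h' := tendsto_densityRatio_compl hS h
    rwa [tsub_zero] at h'

lemma DensityZeroAt.union (hS : MeasurableSet S) (hT : MeasurableSet T)
    (hSx : DensityZeroAt S x) (hTx : DensityZeroAt T x) : DensityZeroAt (S ∪ T) x := by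
  rw [densityZeroAt_iff_tendsto (hS.union hT)]
  rw [densityZeroAt_iff_tendsto hS] at hSx
  rw [densityZeroAt_iff_tendsto hT] at hTx
  exact tendsto_of_tendsto_of_tendsto_of_le_of_le tendsto_const_nhds
    (by simpa using hSx.add hTx) (fun _ => bot_le) fun _ => densityRatio_union_le

lemma not_densityZeroAt_vadd_normalizedCone {U : Set (Euc n)} (hU : IsOpen U)
    (hne : (normalizedCone U).Nonempty) : ¬ DensityZeroAt (x +ᵥ normalizedCone U) x := by
  have hopen := hU.normalizedCone
  set c := densityRatio (normalizedCone U) 0 1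
  have hc : c ≠ 0 := by
    obtain ⟨v, hv⟩ := hne
    refine (ENNReal.div_pos ?_ measure_ball_lt_top.ne).ne'
    exact ((hopen.inter isOpen_ball).measure_pos volume (normalizedCone_inter_ball_nonempty hv)).ne'
  have hconst : densityRatio (x +ᵥ normalizedCone U) x =ᶠ[𝓝[>] 0] fun _ => c := by
    refine eventually_mem_nhdsWithin.mono fun r hr => ?_
    simp only [densityRatio, c]
    rw [addHaar_vadd_normalizedCone_inter_ball volume x hr, Measure.addHaar_ball_of_pos _ _ hr,
      ENNReal.mul_div_mul_left _ _ (by simpa using pow_pos hr _) ENNReal.ofReal_ne_top]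
  rw [densityZeroAt_iff_tendsto (hopen.vadd x).measurableSet]
  intro h
  exact hc (tendsto_nhds_unique (tendsto_const_nhds.congr' hconst.symm) h)

end Density

lemma eq_zero_of_densityZeroAt_direction {n : ℕ} {f : Euc n → ℝ} (hf : Continuous f)
    {A : Set (Euc n)} (hA : MeasurableSet A) {x : Euc n} (hx : DensityOneAt A x)
    (hdir : ∀ ε : ℝ, 0 < ε →
      DensityZeroAt {y | y ∈ A \ {x} ∧ ε < |f (‖y - x‖⁻¹ • (y - x))|} x)
    {v : Euc n} (hv : v ≠ 0) : f (‖v‖⁻¹ • v) = 0 := by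
  by_contra hfv
  have hε : 0 < |f (‖v‖⁻¹ • v)| / 2 := by positivity
  let U := {w : Euc n | |f (‖v‖⁻¹ • v)| / 2 < |f w|}
  have hU : IsOpen U := isOpen_lt continuous_const hf.abs
  have hvU : v ∈ normalizedCone U := ⟨hv, half_lt_self (abs_pos.mpr hfv)⟩
  have hsub : A ∩ (x +ᵥ normalizedCone U) ⊆
      {y | y ∈ A \ {x} ∧
        |f (‖v‖⁻¹ • v)| / 2 < |f (‖y - x‖⁻¹ • (y - x))|} := by
    rintro _ ⟨hyA, c, ⟨hc0, hcU⟩, rfl⟩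
    refine ⟨⟨hyA, ?_⟩, ?_⟩
    · simpa using hc0
    · simp only [vadd_eq_add, add_sub_cancel_left]
      exact hcU
  have hcover : x +ᵥ normalizedCone U ⊆ (A ∩ (x +ᵥ normalizedCone U)) ∪ Aᶜ :=
    fun y hy => (em (y ∈ A)).imp (fun hyA => ⟨hyA, hy⟩) id
  exact not_densityZeroAt_vadd_normalizedCone hU ⟨v, hvU⟩ <|
    (((hdir _ hε).mono hsub).union (hA.inter (hU.normalizedCone.vadd x).measurableSet) hA.compl
      hx.densityZeroAt_compl).mono hcover

/-- **Lemma 3.2** (abelian case). If `P` is a homogeneous polynomial, `A` has density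
one at `x`, and `φ(y) = P((y−x)/‖y−x‖)` has approximate limit `0` at `x` along `A`,
then `P` is identically zero. -/
theorem stmt6 (n : ℕ) (hn : 0 < n) (d : ℕ) (P : MvPolynomial (Fin n) ℝ)
    (hP : P.IsHomogeneous d)
    (A : Set (Euc n)) (hA : MeasurableSet A) (x : Euc n) (hx : DensityOneAt A x)
    (hphi : ∀ ε : ℝ, 0 < ε →
      DensityZeroAt {y : Euc n | y ∈ A \ {x} ∧
        ε < |MvPolynomial.eval (fun i => (‖y - x‖⁻¹ • (y - x)) i) P|} x) :
    ∀ y : Euc n, MvPolynomial.eval (fun i => y i) P = 0 := by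
  let F : Euc n → ℝ := fun v => MvPolynomial.eval (fun i => v i) P
  have hF : Continuous F := (MvPolynomial.continuous_eval P).comp (PiLp.continuous_ofLp 2 _)
  have hsmul (t : ℝ) (v : Euc n) : F (t • v) = t ^ d * F v := hP.eval_smul t _
  have hne (v : Euc n) (hv : v ≠ 0) : F v = 0 := by
    rw [← smul_inv_smul₀ (norm_ne_zero_iff.mpr hv) v, hsmul,
      eq_zero_of_densityZeroAt_direction hF hA hx hphi hv, mul_zero]
  intro y
  obtain rfl | hy := eq_or_ne y 0
  · have he : EuclideanSpace.single (⟨0, hn⟩ : Fin n) (1 : ℝ) ≠ 0 := by simp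
    have h0 := hsmul 0 (EuclideanSpace.single ⟨0, hn⟩ 1)
    rwa [zero_smul, hne _ he, mul_zero] at h0
  · exact hne y hy
end
end

section
/- Let f : ℝ^n → ℝ be measurable, k a nonnegative integer, and suppose f is approximately differentiable of order k at almost every point of ℝ^n. For h ∈ ℕ, h ≥ 1, define the truncation f_h : ℝ^n → ℝ by f_h(x) = f(x) if −h < f(x) < h, f_h(x) = h if f(x) ≥ h, and f_h(x) = −h if f(x) ≤ −h. Then: (a) f_h is approximately differentiable of order k at almost every point of ℝ^n; and (b) if x₀ is a point at which the set {x ∈ ℝ^n : −h < f(x) < h} has density one and at which f is approximately differentiable of order k with polynomial p, then f_h is approximately differentiable of order k at x₀ with the same polynomial p. (This is the paper's truncation lemma, Lemma 4.5, specialized to the abelian Carnot group ℝ^n.) -/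
open MeasureTheory Metric Filter

noncomputable section

/-!
By the Lebesgue density theorem, almost every point is a density point of whichever of the
measurable sets `{f ≥ h}`, `{f ≤ -h}`, `{-h < f < h}` contains it. On the first two the
truncation is constant, on the third it equals `f`, and approximate differentiability at `x₀`
with a given polynomial only depends on the function on a measurable set of density one at `x₀`.
-/

open Set Topology

variable {n : ℕ}

section Density

lemma volume_sphere_eq_zero (x : Euc n) {r : ℝ} (hr : r ≠ 0) : volume (sphere x r) = 0 := by
  rcases subsingleton_or_nontrivial (Euc n) with _ | _
  · rw [sphere_eq_empty_of_subsingleton hr, measure_empty]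
  · exact Measure.addHaar_sphere volume x r

lemma closedBall_ae_eq_ball (x : Euc n) {r : ℝ} (hr : r ≠ 0) :
    closedBall x r =ᵐ[volume] ball x r := by
  rw [← ball_union_sphere]
  exact union_ae_eq_left_of_ae_eq_empty (ae_eq_empty.2 (volume_sphere_eq_zero x hr))

lemma DensityOneAt.of_closedBall {S : Set (Euc n)} {x : Euc n}
    (h : Tendsto (fun r => volume (S ∩ closedBall x r) / volume (closedBall x r))
      (𝓝[>] 0) (𝓝 1)) :
    DensityOneAt S x := by
  refine h.congr' ?_
  filter_upwards [self_mem_nhdsWithin] with r (hr : 0 < r)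
  have hball := closedBall_ae_eq_ball x hr.ne'
  rw [measure_congr hball, measure_congr (ae_eq_set_inter (ae_eq_refl S) hball)]

theorem ae_densityOneAt_of_mem (S : Set (Euc n)) : ∀ᵐ x, x ∈ S → DensityOneAt S x := by
  have h := Besicovitch.ae_tendsto_measure_inter_div (volume : Measure (Euc n)) S
  rw [← Measure.restrict_toMeasurable_of_sFinite,
    ae_restrict_iff' (measurableSet_toMeasurable _ _)] at h
  filter_upwards [h] with x hx hxS using
    DensityOneAt.of_closedBall (hx (subset_toMeasurable _ _ hxS))

lemma densityOneAt_univ (x : Euc n) : DensityOneAt univ x := by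
  refine tendsto_const_nhds.congr' ?_
  filter_upwards [self_mem_nhdsWithin] with r (hr : 0 < r)
  rw [univ_inter, ENNReal.div_self (measure_ball_pos volume x hr).ne' measure_ball_lt_top.ne]

lemma DensityOneAt.mono {S T : Set (Euc n)} {x : Euc n} (hS : DensityOneAt S x)
    (hST : S ⊆ T) : DensityOneAt T x :=
  tendsto_of_tendsto_of_tendsto_of_le_of_le hS (densityOneAt_univ x)
    (fun _ => ENNReal.div_le_div_right (measure_mono (inter_subset_inter_left _ hST)) _)
    (fun _ => ENNReal.div_le_div_right (measure_mono (inter_subset_inter_left _ (subset_univ T))) _)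

lemma DensityOneAt.tendsto_compl {A : Set (Euc n)} {x : Euc n} (hA : MeasurableSet A)
    (dA : DensityOneAt A x) :
    Tendsto (fun r => volume (Aᶜ ∩ ball x r) / volume (ball x r)) (𝓝[>] 0) (𝓝 0) := by
  have h := ENNReal.Tendsto.sub (densityOneAt_univ x) dA (Or.inl ENNReal.one_ne_top)
  rw [tsub_self] at h
  refine h.congr' ?_
  filter_upwards [self_mem_nhdsWithin] with r (hr : 0 < r)
  rw [← ENNReal.sub_div (fun _ _ => (measure_ball_pos volume x hr).ne'), univ_inter,
    ← measure_sdiff inter_subset_right (hA.inter measurableSet_ball).nullMeasurableSet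
      (measure_ne_top_of_subset inter_subset_right measure_ball_lt_top.ne),
    sdiff_inter_self_eq_sdiff, sdiff_eq_compl_inter]

/-- The density of `A ∩ B` is bounded below by that of `B` minus the (vanishing) density
of `Aᶜ`. -/
lemma DensityOneAt.inter {A B : Set (Euc n)} {x : Euc n} (hA : MeasurableSet A)
    (dA : DensityOneAt A x) (dB : DensityOneAt B x) : DensityOneAt (A ∩ B) x := by
  have lower := ENNReal.Tendsto.sub dB (dA.tendsto_compl hA) (Or.inl ENNReal.one_ne_top)
  rw [tsub_zero] at lower
  refine tendsto_of_tendsto_of_tendsto_of_le_of_le lower (densityOneAt_univ x) (fun r => ?_)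
    (fun _ => ENNReal.div_le_div_right (measure_mono (inter_subset_inter_left _ (subset_univ _))) _)
  rw [tsub_le_iff_right, ← ENNReal.add_div]
  refine ENNReal.div_le_div_right ((measure_mono ?_).trans (measure_union_le _ _)) _
  rintro y ⟨hyB, hyr⟩
  by_cases hyA : y ∈ A
  · exact Or.inl ⟨⟨hyA, hyB⟩, hyr⟩
  · exact Or.inr ⟨hyA, hyr⟩

end Density

section ApproxDiff

variable {k : ℕ} {D : Set (Euc n)} {x₀ : Euc n}

lemma isPolyFun_const (n k : ℕ) (c : ℝ) : IsPolyFun n k fun _ => c :=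
  ⟨MvPolynomial.C c, by simp, fun _ => by simp⟩

lemma approxDiffAt_const (hD : DensityOneAt D x₀) (c : ℝ) :
    ApproxDiffAt k D (fun _ => c) x₀ (fun _ => c) := by
  refine ⟨hD, isPolyFun_const n k c, fun ε hε => (densityOneAt_univ x₀).mono ?_⟩
  rintro x - ⟨-, hlt⟩
  rw [sub_self, abs_zero] at hlt
  exact hlt.not_ge (by positivity)

lemma ApproxDiffAt.congr_of_eqOn {f g p : Euc n → ℝ} {A : Set (Euc n)}
    (hf : ApproxDiffAt k D f x₀ p) (hA : MeasurableSet A) (dA : DensityOneAt A x₀)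
    (hfg : EqOn f g A) : ApproxDiffAt k D g x₀ p := by
  obtain ⟨hD, hp, hbad⟩ := hf
  refine ⟨hD, hp, fun ε hε => (dA.inter hA (hbad ε hε)).mono ?_⟩
  rintro x ⟨hxA, hx⟩ ⟨hxD, hlt⟩
  exact hx ⟨hxD, hfg hxA ▸ hlt⟩

end ApproxDiff

section Trunc

variable {h : ℕ} {f : Euc n → ℝ} {x : Euc n}

lemma trunc_of_le (hx : (h : ℝ) ≤ f x) : trunc h f x = h := if_pos hx

lemma trunc_of_le_neg (hx : f x ≤ -(h : ℝ)) : trunc h f x = -(h : ℝ) := by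
  unfold trunc
  split_ifs with hpos
  · -- `h ≤ f x ≤ -h` forces `h = 0`
    linarith [(h.cast_nonneg : (0 : ℝ) ≤ h)]
  · rfl

lemma trunc_of_mem_Ioo (hx : f x ∈ Ioo (-(h : ℝ)) h) : trunc h f x = f x := by
  unfold trunc
  rw [if_neg hx.2.not_ge, if_neg hx.1.not_ge]

end Trunc

lemma approxDiffAt_trunc {k h : ℕ} {D : Set (Euc n)} {f p : Euc n → ℝ} {x₀ : Euc n}
    (hf : Measurable f) (dE : DensityOneAt {x : Euc n | -(h : ℝ) < f x ∧ f x < (h : ℝ)} x₀)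
    (hap : ApproxDiffAt k D f x₀ p) : ApproxDiffAt k D (trunc h f) x₀ p :=
  hap.congr_of_eqOn (hf measurableSet_Ioo) dE fun _ hx => (trunc_of_mem_Ioo hx).symm

theorem stmt14_general (n : ℕ) (k : ℕ) (f : Euc n → ℝ) (hf : Measurable f)
    (hdiff : ∀ᵐ x₀ ∂(volume : Measure (Euc n)),
      ∃ p : Euc n → ℝ, ApproxDiffAt k Set.univ f x₀ p)
    (h : ℕ) :
    (∀ᵐ x₀ ∂(volume : Measure (Euc n)),
      ∃ p : Euc n → ℝ, ApproxDiffAt k Set.univ (trunc h f) x₀ p) ∧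
    (∀ x₀ : Euc n, DensityOneAt {x : Euc n | -(h : ℝ) < f x ∧ f x < (h : ℝ)} x₀ →
      ∀ p : Euc n → ℝ, ApproxDiffAt k Set.univ f x₀ p →
        ApproxDiffAt k Set.univ (trunc h f) x₀ p) := by
  refine ⟨?_, fun x₀ dE p hap => approxDiffAt_trunc hf dE hap⟩
  filter_upwards [hdiff, ae_densityOneAt_of_mem (f ⁻¹' Ici (h : ℝ)),
    ae_densityOneAt_of_mem (f ⁻¹' Iic (-(h : ℝ))), ae_densityOneAt_of_mem (f ⁻¹' Ioo (-(h : ℝ)) h)]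
    with x₀ ⟨p, hp⟩ dAbove dBelow dBetween
  have hconst (c : ℝ) := approxDiffAt_const (k := k) (densityOneAt_univ x₀) c
  rcases le_or_gt (h : ℝ) (f x₀) with hx₀ | hx₀
  · exact ⟨_, (hconst h).congr_of_eqOn (hf measurableSet_Ici) (dAbove hx₀)
      fun _ hx => (trunc_of_le hx).symm⟩
  rcases le_or_gt (f x₀) (-(h : ℝ)) with hx₀' | hx₀'
  · exact ⟨_, (hconst (-h)).congr_of_eqOn (hf measurableSet_Iic) (dBelow hx₀')
      fun _ hx => (trunc_of_le_neg hx).symm⟩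
  · exact ⟨p, approxDiffAt_trunc hf (dBetween ⟨hx₀', hx₀⟩) hp⟩

/-- **Lemma 4.5** (truncation, abelian case). If `f` is approximately differentiable
of order `k` a.e., then (a) so is each truncation `f_h`; and (b) at any point where
`{−h < f < h}` has density one, `f_h` has the same approximate derivative as `f`. -/
theorem stmt14 (n : ℕ) (hn : 0 < n) (k : ℕ) (f : Euc n → ℝ) (hf : Measurable f)
    (hdiff : ∀ᵐ x₀ ∂(volume : Measure (Euc n)),
      ∃ p : Euc n → ℝ, ApproxDiffAt k Set.univ f x₀ p)
    (h : ℕ) (hh : 1 ≤ h) :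
    (∀ᵐ x₀ ∂(volume : Measure (Euc n)),
      ∃ p : Euc n → ℝ, ApproxDiffAt k Set.univ (trunc h f) x₀ p) ∧
    (∀ x₀ : Euc n, DensityOneAt {x : Euc n | -(h : ℝ) < f x ∧ f x < (h : ℝ)} x₀ →
      ∀ p : Euc n → ℝ, ApproxDiffAt k Set.univ f x₀ p →
        ApproxDiffAt k Set.univ (trunc h f) x₀ p) :=
  stmt14_general n k f hf hdiff h
end
end
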